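/- Let L be a real symmetric matrix commuting with M = (e_a - e_b)(e_a - e_b)^T (a ≠ b), let τ, α ∈ R with 2ατ an odd integer multiple of π, and suppose exp(-iτL) e_a = γ e_a for some complex γ (periodicity at a). Then exp(-iτ(L+αM)) e_b = γ e_a, i.e., the perturbed system has perfect state transfer between a and b at time τ. -/

import Mathlib

/-! The rank-one matrix `M = u uᵀ`, `u = e_a - e_b`, satisfies `M² = 2M`, so `exp (c M)` collapses
to `1 + ((exp (2c) - 1) / 2) M`. The hypothesis on `2ατ` makes `exp (-2iατ) = -1`, hence
`exp (-iταM) = 1 - M`, which maps `e_b` to `e_a`. Since `L` commutes with `M`, the exponential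
splits: `exp (-iτ(L + αM)) e_b = exp (-iτL) (1 - M) e_b = exp (-iτL) e_a = γ e_a`. -/

open Matrix Complex

namespace NormedSpace

variable {𝕂 𝔸 : Type*} [RCLike 𝕂] [NormedRing 𝔸] [NormedAlgebra 𝕂 𝔸] [CompleteSpace 𝔸]

theorem exp_smul_of_isIdempotentElem {P : 𝔸} (hP : IsIdempotentElem P) (s : 𝕂) :
    exp (s • P) = 1 + (exp s - 1) • P := by
  have hterm : ∀ k : ℕ, (k.factorial⁻¹ : 𝕂) • (s • P) ^ k =
      ((k.factorial⁻¹ : 𝕂) • s ^ k) • P + if k = 0 then 1 - P else 0 := by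
    rintro (_ | k)
    · simp
    · rw [smul_pow, hP.pow_succ_eq, smul_smul, smul_eq_mul, if_neg k.succ_ne_zero, add_zero]
  have hsum := ((exp_series_hasSum_exp' (𝕂 := 𝕂) s).smul_const P).add (hasSum_ite_eq 0 (1 - P))
  simp_rw [← hterm] at hsum
  rw [(exp_series_hasSum_exp' (𝕂 := 𝕂) (s • P)).unique hsum, sub_smul, one_smul]
  abel

theorem exp_smul_eq_one_sub_of_mul_self_eq_two_smul {M : 𝔸} (hM : M * M = (2 : 𝕂) • M)
    {c : 𝕂} (hc : exp (2 * c) = -1) : exp (c • M) = 1 - M := by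
  have hP : IsIdempotentElem ((2⁻¹ : 𝕂) • M) := by
    rw [IsIdempotentElem, smul_mul_smul_comm, hM, smul_smul, mul_assoc,
      inv_mul_cancel₀ (two_ne_zero' 𝕂), mul_one]
  have hcM : c • M = (2 * c) • (2⁻¹ : 𝕂) • M := by
    rw [smul_smul, mul_comm 2 c, mul_inv_cancel_right₀ two_ne_zero]
  rw [hcM, exp_smul_of_isIdempotentElem hP, hc, smul_smul]
  norm_num
  abel

end NormedSpace

open scoped Matrix.Norms.Operator in
theorem Matrix.exp_smul_eq_one_sub_of_mul_self_eq_two_smul {m 𝕂 : Type*} [Fintype m]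
    [DecidableEq m] [RCLike 𝕂] {M : Matrix m m 𝕂} (hM : M * M = (2 : 𝕂) • M)
    {c : 𝕂} (hc : NormedSpace.exp (2 * c) = -1) : NormedSpace.exp (c • M) = 1 - M :=
  NormedSpace.exp_smul_eq_one_sub_of_mul_self_eq_two_smul hM hc

theorem Complex.exp_neg_mul_I_eq_neg_one_of_eq_odd_mul_pi {θ : ℝ} {k : ℤ}
    (h : θ = (2 * k + 1) * Real.pi) : Complex.exp (-(θ * I)) = -1 := by
  have : (θ : ℂ) * I = k * (2 * Real.pi * I) + Real.pi * I := by
    rw [h]; push_cast; ring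
  rw [Complex.exp_neg, this, Complex.exp_add, exp_int_mul_two_pi_mul_I, exp_pi_mul_I]
  norm_num

theorem Matrix.map_vecMulVec {m n α β F : Type*} [Mul α] [Mul β] [FunLike F α β]
    [MulHomClass F α β] (f : F) (u : m → α) (v : n → α) :
    (vecMulVec u v).map f = vecMulVec (f ∘ u) (f ∘ v) := by
  ext; simp [vecMulVec_apply]

section

variable {m R : Type*} [Fintype m] [DecidableEq m] [CommRing R] {a b : m}

theorem dotProduct_single_sub_single_self (hab : a ≠ b) :
    (Pi.single a 1 - Pi.single b 1 : m → R) ⬝ᵥ (Pi.single a 1 - Pi.single b 1) = 2 := by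
  simp [dotProduct_sub, hab, hab.symm, one_add_one_eq_two]

theorem vecMulVec_single_sub_single_mul_self (hab : a ≠ b) :
    vecMulVec (Pi.single a 1 - Pi.single b 1) (Pi.single a 1 - Pi.single b 1) *
        vecMulVec (Pi.single a 1 - Pi.single b 1) (Pi.single a 1 - Pi.single b 1) =
      (2 : R) • (vecMulVec (Pi.single a 1 - Pi.single b 1) (Pi.single a 1 - Pi.single b 1) :
        Matrix m m R) := by
  rw [vecMulVec_mul_vecMulVec, dotProduct_single_sub_single_self hab, vecMulVec_smul]

theorem one_sub_vecMulVec_single_sub_single_mulVec_single (hab : a ≠ b) :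
    (1 - vecMulVec (Pi.single a 1 - Pi.single b 1) (Pi.single a 1 - Pi.single b 1) : Matrix m m R)
      *ᵥ Pi.single b 1 = Pi.single a 1 := by
  rw [sub_mulVec, one_mulVec, vecMulVec_mulVec]
  simp [hab.symm]

end

theorem pst_of_periodicity_perturbed_general {n : ℕ}
    (L : Matrix (Fin n) (Fin n) ℝ) (a b : Fin n) (hab : a ≠ b)
    (α τ : ℝ) (hτ : ∃ k : ℤ, 2 * α * τ = (2 * k + 1) * Real.pi)
    (hcomm :
      L * vecMulVec (Pi.single a 1 - Pi.single b 1) (Pi.single a 1 - Pi.single b 1) =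
      vecMulVec (Pi.single a 1 - Pi.single b 1) (Pi.single a 1 - Pi.single b 1) * L)
    (γ : ℂ)
    (hper : NormedSpace.exp ((-(I * τ)) • L.map Complex.ofReal) *ᵥ Pi.single a 1 =
      γ • (Pi.single a 1 : Fin n → ℂ)) :
    NormedSpace.exp ((-(I * τ)) •
        (L.map Complex.ofReal + (α : ℂ) •
          vecMulVec (Pi.single a 1 - Pi.single b 1) (Pi.single a 1 - Pi.single b 1))) *ᵥ
      Pi.single b 1 = γ • (Pi.single a 1 : Fin n → ℂ) := by
  obtain ⟨k, hk⟩ := hτ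
  set M : Matrix (Fin n) (Fin n) ℂ :=
    vecMulVec (Pi.single a 1 - Pi.single b 1) (Pi.single a 1 - Pi.single b 1)
  have hcommℂ : Commute (L.map Complex.ofReal) M := by
    have := congrArg (Matrix.map · Complex.ofRealHom) hcomm
    have hu : ⇑ofRealHom ∘ (Pi.single a 1 - Pi.single b 1 : Fin n → ℝ) =
        Pi.single a 1 - Pi.single b 1 := by
      ext i; simp only [Function.comp_apply, Pi.sub_apply, Pi.single_apply]; split_ifs <;> simp
    rwa [Matrix.map_mul, Matrix.map_mul, Matrix.map_vecMulVec, hu] at this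
  have hphase : NormedSpace.exp (2 * (-(I * τ) * α)) = -1 := by
    rw [← Complex.exp_eq_exp_ℂ, ← Complex.exp_neg_mul_I_eq_neg_one_of_eq_odd_mul_pi hk]
    push_cast; ring_nf
  have hexp : NormedSpace.exp ((-(I * τ)) • (L.map Complex.ofReal + (α : ℂ) • M)) =
      NormedSpace.exp ((-(I * τ)) • L.map Complex.ofReal) * (1 - M) := by
    rw [smul_add, smul_smul, Matrix.exp_add_of_commute _ _ ((hcommℂ.smul_right _).smul_left _),
      Matrix.exp_smul_eq_one_sub_of_mul_self_eq_two_smul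
        (vecMulVec_single_sub_single_mul_self hab) hphase]
  rw [hexp, ← mulVec_mulVec, one_sub_vecMulVec_single_sub_single_mulVec_single hab, hper]

/-- If `L` is real symmetric, commutes with `M = (e_a - e_b)(e_a - e_b)ᵀ`
(`a ≠ b`), `2ατ` is an odd multiple of `π`, and the unperturbed walk is
periodic at `a` at time `τ` (`exp(-iτL)e_a = γ e_a`), then the perturbed walk
has perfect state transfer: `exp(-iτ(L+αM)) e_b = γ e_a`. -/
theorem pst_of_periodicity_perturbed {n : ℕ}
    (L : Matrix (Fin n) (Fin n) ℝ) (hL : L.IsSymm) (a b : Fin n) (hab : a ≠ b)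
    (α τ : ℝ) (hτ : ∃ k : ℤ, 2 * α * τ = (2 * k + 1) * Real.pi)
    (hcomm :
      L * vecMulVec (Pi.single a 1 - Pi.single b 1) (Pi.single a 1 - Pi.single b 1) =
      vecMulVec (Pi.single a 1 - Pi.single b 1) (Pi.single a 1 - Pi.single b 1) * L)
    (γ : ℂ)
    (hper : NormedSpace.exp ((-(I * τ)) • L.map Complex.ofReal) *ᵥ Pi.single a 1 =
      γ • (Pi.single a 1 : Fin n → ℂ)) :
    NormedSpace.exp ((-(I * τ)) •
        (L.map Complex.ofReal + (α : ℂ) •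
          vecMulVec (Pi.single a 1 - Pi.single b 1) (Pi.single a 1 - Pi.single b 1))) *ᵥ
      Pi.single b 1 = γ • (Pi.single a 1 : Fin n → ℂ) :=
  pst_of_periodicity_perturbed_general L a b hab α τ hτ hcomm γ hper
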